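/- The family (i, j) ↦ |QNC(p_i, p_j)|, indexed by pairs of positive integers i, j, is summable; that is, ∑_{i=1}^∞ ∑_{j=1}^∞ |R_{ij}| < ∞, where R_{ij} = QNC(p_i, p_j). -/

import Mathlib

/-!
For `x, y ≥ 2` the `k`-th summand of `F x y` is at most `2 s (x s)^k` with `s = y^(-x)`, because
`x^(k+1) ≥ (k+1) x` gives `y^(-x^(k+1)) ≤ s^(k+1)`, and `x s ≤ x 2^(-x) ≤ 1/2`. Hence
`0 ≤ F x y ≤ 4 y^(-x)`, and `QNC x y` is a difference of two such nonnegative terms, so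
`|QNC x y| ≤ (y^(-x) + x^(-y)) / 3`. Finally `p_i ≥ i + 2` gives `p_j^(-p_i) ≤ 2^(-i) (j+2)^(-2)`,
which is summable over pairs.
-/

open Real

/-- `F(x,y) = ∑_{k=1}^∞ x^{k-1} · y^{-x^k} / (1 - y^{-x^k})²`. -/
noncomputable def F (x y : ℝ) : ℝ :=
  ∑' k : ℕ, x ^ (k : ℝ) * y ^ (-(x ^ ((k : ℝ) + 1))) / (1 - y ^ (-(x ^ ((k : ℝ) + 1)))) ^ 2

/-- `QNC(x,y) = (1/(12xy)) · ( x(y-1)F(x,y) - y(x-1)F(y,x) )`. -/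
noncomputable def QNC (x y : ℝ) : ℝ :=
  1 / (12 * x * y) * (x * (y - 1) * F x y - y * (x - 1) * F y x)

/-- `nthPrime i` is the `(i+1)`-st prime, so `nthPrime 0 = 2`, `nthPrime 1 = 3`, ... -/
noncomputable def nthPrime (i : ℕ) : ℕ := Nat.nth Nat.Prime i

noncomputable def FSummand (x y : ℝ) (k : ℕ) : ℝ :=
  x ^ k * y ^ (-x ^ (k + 1)) / (1 - y ^ (-x ^ (k + 1))) ^ 2

lemma F_eq_tsum_FSummand (x y : ℝ) : F x y = ∑' k, FSummand x y k := by
  simp only [F, FSummand, ← Nat.cast_succ, rpow_natCast]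

section

variable {x y : ℝ}

lemma two_mul_le_two_rpow (hx : 2 ≤ x) : 2 * x ≤ 2 ^ x := by
  have bernoulli := one_add_mul_self_le_rpow_one_add (s := 1) (by norm_num) (p := x - 1)
    (by linarith)
  rw [one_add_one_eq_two, rpow_sub_one two_ne_zero] at bernoulli
  linarith

lemma mul_rpow_neg_le_half (hx : 2 ≤ x) (hy : 2 ≤ y) : x * y ^ (-x) ≤ 1 / 2 := by
  have h2x : 0 < (2 : ℝ) ^ x := by positivity
  calc x * y ^ (-x) ≤ x * 2 ^ (-x) :=
        mul_le_mul_of_nonneg_left (rpow_le_rpow_of_nonpos two_pos hy (by linarith)) (by linarith)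
    _ = x / 2 ^ x := by rw [rpow_neg zero_le_two, div_eq_mul_inv]
    _ ≤ 1 / 2 := by
        rw [div_le_div_iff₀ h2x two_pos]
        linarith [two_mul_le_two_rpow hx]

lemma rpow_neg_pow_succ_le (hx : 2 ≤ x) (hy : 1 ≤ y) (k : ℕ) :
    y ^ (-x ^ (k + 1)) ≤ (y ^ (-x)) ^ (k + 1) := by
  rw [← rpow_mul_natCast (by linarith)]
  apply rpow_le_rpow_of_exponent_le hy
  have hk : (k : ℝ) + 1 ≤ x ^ k := by
    have := one_add_mul_le_pow (a := x - 1) (by linarith) k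
    rw [add_sub_cancel] at this
    nlinarith [k.cast_nonneg (α := ℝ)]
  push_cast
  rw [pow_succ]
  nlinarith

lemma FSummand_nonneg (hx : 0 ≤ x) (hy : 0 ≤ y) (k : ℕ) : 0 ≤ FSummand x y k := by
  unfold FSummand
  positivity

lemma FSummand_le (hx : 2 ≤ x) (hy : 2 ≤ y) (k : ℕ) :
    FSummand x y k ≤ 2 * y ^ (-x) * (1 / 2) ^ k := by
  set s := y ^ (-x)
  set u := y ^ (-x ^ (k + 1))
  have hxs : x * s ≤ 1 / 2 := mul_rpow_neg_le_half hx hy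
  have hs : 0 ≤ s := by positivity
  have hu : 0 ≤ u := by positivity
  have hus : u ≤ s ^ (k + 1) := rpow_neg_pow_succ_le hx (by linarith) k
  have hs_quarter : s ≤ 1 / 4 := by nlinarith
  have hu_quarter : u ≤ 1 / 4 :=
    hus.trans ((pow_le_of_le_one hs (by linarith) k.succ_ne_zero).trans hs_quarter)
  have hden : 1 / 2 ≤ (1 - u) ^ 2 := by nlinarith
  calc FSummand x y k = x ^ k * u / (1 - u) ^ 2 := rfl
    _ ≤ x ^ k * u / (1 / 2) := by gcongr
    _ = 2 * (x ^ k * u) := by ring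
    _ ≤ 2 * (x ^ k * s ^ (k + 1)) := by gcongr
    _ = 2 * s * (x * s) ^ k := by ring
    _ ≤ 2 * s * (1 / 2) ^ k := by gcongr

lemma summable_FSummand (hx : 2 ≤ x) (hy : 2 ≤ y) : Summable (FSummand x y) :=
  (summable_geometric_two.mul_left _).of_nonneg_of_le
    (FSummand_nonneg (by linarith) (by linarith)) (FSummand_le hx hy)

lemma F_nonneg (hx : 0 ≤ x) (hy : 0 ≤ y) : 0 ≤ F x y := by
  rw [F_eq_tsum_FSummand]
  exact tsum_nonneg (FSummand_nonneg hx hy)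

lemma F_le (hx : 2 ≤ x) (hy : 2 ≤ y) : F x y ≤ 4 * y ^ (-x) := by
  rw [F_eq_tsum_FSummand]
  calc ∑' k, FSummand x y k ≤ ∑' k : ℕ, 2 * y ^ (-x) * (1 / 2) ^ k :=
        (summable_FSummand hx hy).tsum_le_tsum (FSummand_le hx hy)
          (summable_geometric_two.mul_left _)
    _ = 4 * y ^ (-x) := by rw [tsum_mul_left, tsum_geometric_two]; ring

lemma mul_sub_one_mul_F_le (hx : 2 ≤ x) (hy : 2 ≤ y) :
    x * (y - 1) * F x y ≤ 4 * (x * y) * (y ^ (-x) + x ^ (-y)) := by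
  have hxy : 0 ≤ x * y := by nlinarith
  calc x * (y - 1) * F x y ≤ x * y * (4 * y ^ (-x)) := by
        gcongr
        · exact F_nonneg (by linarith) (by linarith)
        · linarith
        · exact F_le hx hy
    _ = 4 * (x * y) * y ^ (-x) := by ring
    _ ≤ 4 * (x * y) * (y ^ (-x) + x ^ (-y)) := by
        gcongr
        exact le_add_of_nonneg_right (rpow_nonneg (by linarith) _)

lemma abs_QNC_le (hx : 2 ≤ x) (hy : 2 ≤ y) : |QNC x y| ≤ (y ^ (-x) + x ^ (-y)) / 3 := by
  have hA0 : 0 ≤ x * (y - 1) * F x y :=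
    mul_nonneg (mul_nonneg (by linarith) (by linarith)) (F_nonneg (by linarith) (by linarith))
  have hB0 : 0 ≤ y * (x - 1) * F y x :=
    mul_nonneg (mul_nonneg (by linarith) (by linarith)) (F_nonneg (by linarith) (by linarith))
  have hB := mul_sub_one_mul_F_le hy hx
  rw [mul_comm y x, add_comm (x ^ (-y))] at hB
  rw [QNC, abs_mul, abs_of_pos (by positivity)]
  calc 1 / (12 * x * y) * |x * (y - 1) * F x y - y * (x - 1) * F y x|
      ≤ 1 / (12 * x * y) * (4 * (x * y) * (y ^ (-x) + x ^ (-y))) := by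
        gcongr
        exact abs_sub_le_of_nonneg_of_le hA0 (mul_sub_one_mul_F_le hx hy) hB0 hB
    _ = (y ^ (-x) + x ^ (-y)) / 3 := by field_simp; ring

end

lemma rpow_neg_le_of_add_two_le {a b : ℝ} {i j : ℕ} (ha : i + 2 ≤ a) (hb : j + 2 ≤ b) :
    b ^ (-a) ≤ (1 / 2) ^ i * (((j : ℝ) + 2) ^ 2)⁻¹ := by
  have hb2 : 2 ≤ b := by linarith [j.cast_nonneg (α := ℝ)]
  calc b ^ (-a) ≤ b ^ (-((i + 2 : ℕ) : ℝ)) := by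
        apply rpow_le_rpow_of_exponent_le (by linarith)
        push_cast
        linarith
    _ = (b ^ 2 * b ^ i)⁻¹ := by rw [rpow_neg (by linarith), rpow_natCast, pow_add, mul_comm]
    _ ≤ (((j : ℝ) + 2) ^ 2 * 2 ^ i)⁻¹ := by gcongr
    _ = (1 / 2) ^ i * (((j : ℝ) + 2) ^ 2)⁻¹ := by rw [mul_inv, one_div_pow, one_div, mul_comm]

lemma summable_rpow_neg_of_add_two_le {q : ℕ → ℝ} (hq : ∀ i, i + 2 ≤ q i) :
    Summable (fun ij : ℕ × ℕ => q ij.2 ^ (-q ij.1)) := by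
  have hinvsq : Summable (fun j : ℕ => (((j : ℝ) + 2) ^ 2)⁻¹) := by
    have := (summable_nat_add_iff 2).mpr (Real.summable_nat_pow_inv.mpr one_lt_two)
    exact_mod_cast this
  have hmajorant := summable_geometric_two.mul_of_nonneg hinvsq
    (fun _ => by positivity) (fun _ => by positivity)
  refine hmajorant.of_nonneg_of_le (fun ij => rpow_nonneg ?_ _)
    (fun ij => rpow_neg_le_of_add_two_le (hq ij.1) (hq ij.2))
  linarith [hq ij.2, ij.2.cast_nonneg (α := ℝ)]

/-- The family `(i, j) ↦ |QNC(p_i, p_j)|` over pairs of positive integers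
(reindexed from `0`) is summable: `∑_i ∑_j |R_{ij}| < ∞`. -/
theorem summable_abs_R :
    Summable (fun ij : ℕ × ℕ =>
      |QNC (nthPrime ij.1 : ℝ) (nthPrime ij.2 : ℝ)|) := by
  have hp : ∀ i : ℕ, (i : ℝ) + 2 ≤ nthPrime i := fun i => by
    exact_mod_cast Nat.add_two_le_nth_prime i
  have two_le : ∀ i, (2 : ℝ) ≤ nthPrime i := fun i => by
    exact_mod_cast (Nat.prime_nth_prime i).two_le
  have hs := summable_rpow_neg_of_add_two_le hp
  refine Summable.of_nonneg_of_le (fun _ => abs_nonneg _)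
    (fun ij => abs_QNC_le (two_le ij.1) (two_le ij.2))
    ((hs.add (hs.comp_injective Prod.swap_injective)).div_const 3)
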